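/- arXiv:2301.02339 — 2 statements merged into one kernel-verified Lean document; each statement's English description precedes it below -/
import Mathlib

section
/- With J invertible skew-Hermitian, Hermitian matrices Δ₁,…,Δ_N, matrices U₁,…,U_N satisfying U_j* J U_j = J, set B₊(j) = J + Δ_j/2, B₋(j) = J − Δ_j/2 = −B₊(j)*, ℬ = diag(B₊(1),…,B₊(N)), 𝒰 = diag(U₁,…,U_N), 𝒥 = diag(J,…,J). Let E_⊤ = (0, Id) and E_⊥ = (Id, 0) be the nN×n(N+1) matrices deleting the first resp. last n coordinates. Define B = ℬ* 𝒰 E_⊥ + ℬ E_⊤ and C = (1/2)(𝒰 E_⊥ + E_⊤). Then C*B − B*C equals the n(N+1)×n(N+1) block diagonal matrix diag(−J, 0, …, 0, J). -/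
open Matrix

noncomputable section

/-- `E_⊤ = (0, Id)`: the `nN × n(N+1)` matrix stripping the first `n`
coordinates, i.e. mapping `(c₀,…,c_N)` to `(c₁,…,c_N)`. -/
def Etop (n N : ℕ) : Matrix (Fin n × Fin N) (Fin n × Fin (N + 1)) ℂ :=
  Matrix.of fun p q => if p.1 = q.1 ∧ (p.2 : ℕ) + 1 = (q.2 : ℕ) then 1 else 0

/-- `E_⊥ = (Id, 0)`: the `nN × n(N+1)` matrix stripping the last `n`
coordinates, i.e. mapping `(c₀,…,c_N)` to `(c₀,…,c_{N-1})`. -/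
def Ebot (n N : ℕ) : Matrix (Fin n × Fin N) (Fin n × Fin (N + 1)) ℂ :=
  Matrix.of fun p q => if p.1 = q.1 ∧ (p.2 : ℕ) = (q.2 : ℕ) then 1 else 0

/-- `ℬ = diag(J+Δ₁/2, …, J+Δ_N/2)`. -/
def BB {n N : ℕ} (J : Matrix (Fin n) (Fin n) ℂ)
    (Δ : Fin N → Matrix (Fin n) (Fin n) ℂ) :
    Matrix (Fin n × Fin N) (Fin n × Fin N) ℂ :=
  blockDiagonal fun j => J + (1/2 : ℂ) • Δ j

/-- `𝒥 = diag(J, …, J)`. -/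
def JJ {n : ℕ} (N : ℕ) (J : Matrix (Fin n) (Fin n) ℂ) :
    Matrix (Fin n × Fin N) (Fin n × Fin N) ℂ :=
  blockDiagonal fun _ : Fin N => J

/-- `𝒰 = diag(U₁, …, U_N)`. -/
def UU {n N : ℕ} (U : Fin N → Matrix (Fin n) (Fin n) ℂ) :
    Matrix (Fin n × Fin N) (Fin n × Fin N) ℂ :=
  blockDiagonal U

/-- `B = ℬ* 𝒰 E_⊥ + ℬ E_⊤`. -/
def Bmat {n N : ℕ} (J : Matrix (Fin n) (Fin n) ℂ)
    (Δ : Fin N → Matrix (Fin n) (Fin n) ℂ)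
    (U : Fin N → Matrix (Fin n) (Fin n) ℂ) :
    Matrix (Fin n × Fin N) (Fin n × Fin (N + 1)) ℂ :=
  (BB J Δ)ᴴ * UU U * Ebot n N + BB J Δ * Etop n N

/-- `C = (1/2)(𝒰 E_⊥ + E_⊤)`. -/
def Cmat {n N : ℕ} (U : Fin N → Matrix (Fin n) (Fin n) ℂ) :
    Matrix (Fin n × Fin N) (Fin n × Fin (N + 1)) ℂ :=
  (1/2 : ℂ) • (UU U * Ebot n N + Etop n N)

/-- The middle-columns embedding `Fin n × Fin (N-1) → Fin n × Fin (N+1)`,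
skipping the first and last `n` columns. -/
def midCols (n N : ℕ) (q : Fin n × Fin (N - 1)) : Fin n × Fin (N + 1) :=
  (q.1, ⟨(q.2 : ℕ) + 1, by have := q.2.isLt; omega⟩)

/-- `B_m`: the matrix `B` with its first `n` and last `n` columns removed. -/
def Bm {n N : ℕ} (J : Matrix (Fin n) (Fin n) ℂ)
    (Δ : Fin N → Matrix (Fin n) (Fin n) ℂ)
    (U : Fin N → Matrix (Fin n) (Fin n) ℂ) :
    Matrix (Fin n × Fin N) (Fin n × Fin (N - 1)) ℂ :=
  (Bmat J Δ U).submatrix id (midCols n N)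

/-- `C_m`: the matrix `C` with its first `n` and last `n` columns removed. -/
def Cm {n N : ℕ} (U : Fin N → Matrix (Fin n) (Fin n) ℂ) :
    Matrix (Fin n × Fin N) (Fin n × Fin (N - 1)) ℂ :=
  (Cmat U).submatrix id (midCols n N)

end

section aux
open Matrix

lemma aux_alg {m k : Type} [Fintype m] [DecidableEq m] [Fintype k]
    (a t : Matrix m k ℂ) (s jj : Matrix m m ℂ) (hs : sᴴ = s - (2:ℂ) • jj) :
    ((1/2:ℂ) • (a + t))ᴴ * (sᴴ * a + s * t) - (sᴴ * a + s * t)ᴴ * ((1/2:ℂ) • (a + t)) =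
      tᴴ * jj * t - aᴴ * jj * a := by
  have hstar : star (1/2 : ℂ) = 1/2 := by norm_num
  simp only [conjTranspose_smul, conjTranspose_add, conjTranspose_mul,
    conjTranspose_conjTranspose, hstar]
  rw [hs]
  simp only [Matrix.sub_mul, Matrix.mul_sub, Matrix.add_mul, Matrix.mul_add,
    Matrix.smul_mul, Matrix.mul_smul, smul_sub, smul_add, smul_smul, Matrix.mul_assoc]
  module

lemma aux_top {n N : ℕ} (J : Matrix (Fin n) (Fin n) ℂ) (p q : Fin n × Fin (N+1)) :
    ((Etop n N)ᴴ * JJ N J * Etop n N) p q =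
    if (p.2 : ℕ) = q.2 ∧ 1 ≤ (p.2 : ℕ) then J p.1 q.1 else 0 := by
  simp only [mul_apply, Etop, JJ, blockDiagonal_apply, conjTranspose_apply, of_apply,
    Fintype.sum_prod_type, apply_ite star, star_one, star_zero, ite_mul, one_mul, zero_mul,
    mul_ite, mul_zero, mul_one]
  rw [Finset.sum_comm]
  simp only [ite_and, Finset.sum_ite_eq', Finset.mem_univ, if_true]
  by_cases hq : 1 ≤ (q.2 : ℕ)
  · rw [Finset.sum_eq_single (⟨(q.2:ℕ) - 1, by omega⟩ : Fin N)]
    · simp only [Fin.val_mk]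
      by_cases hpq : (p.2:ℕ) = q.2
      · have e1 : (q.2:ℕ) - 1 + 1 = (p.2:ℕ) := by omega
        have e2 : 1 ≤ (p.2:ℕ) := by omega
        simp [hpq, e1, e2, hq]
      · have h1 : ¬((q.2:ℕ) - 1 + 1 = p.2) := by omega
        simp [h1, hpq]
    · intro b _ hb
      have : ¬((b:ℕ) + 1 = q.2) := by
        intro h; apply hb; apply Fin.ext; simp; omega
      simp [this]
    · simp
  · have h0 : ∀ b : Fin N, ¬((b:ℕ) + 1 = q.2) := by intro b; omega
    simp only [h0, if_false, Finset.sum_const_zero]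
    split_ifs with h h' <;> first | rfl | omega

lemma aux_bot {n N : ℕ} (J : Matrix (Fin n) (Fin n) ℂ) (p q : Fin n × Fin (N+1)) :
    ((Ebot n N)ᴴ * JJ N J * Ebot n N) p q =
    if (p.2 : ℕ) = q.2 ∧ (q.2 : ℕ) < N then J p.1 q.1 else 0 := by
  simp only [mul_apply, Ebot, JJ, blockDiagonal_apply, conjTranspose_apply, of_apply,
    Fintype.sum_prod_type, apply_ite star, star_one, star_zero, ite_mul, one_mul, zero_mul,
    mul_ite, mul_zero, mul_one]
  rw [Finset.sum_comm]
  simp only [ite_and, Finset.sum_ite_eq', Finset.mem_univ, if_true]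
  by_cases hq : (q.2 : ℕ) < N
  · rw [Finset.sum_eq_single (⟨(q.2:ℕ), by omega⟩ : Fin N)]
    · simp only [Fin.val_mk]
      by_cases hpq : (p.2:ℕ) = q.2
      · simp [hpq, hq]
      · have h1 : ¬((q.2:ℕ) = (p.2:ℕ)) := by omega
        simp [h1, hpq]
    · intro b _ hb
      have : ¬((b:ℕ) = (q.2:ℕ)) := by
        intro h; apply hb; apply Fin.ext; simpa using h
      simp [this]
    · simp
  · have h0 : ∀ b : Fin N, ¬((b:ℕ) = (q.2:ℕ)) := by intro b; have := b.isLt; omega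
    simp only [h0, if_false, Finset.sum_const_zero]
    split_ifs with h h' <;> first | rfl | omega

end aux

/-- `C*B - B*C = diag(-J, 0, …, 0, J)`. -/
theorem stmt6 {n N : ℕ} (J : Matrix (Fin n) (Fin n) ℂ)
    (hJ : Jᴴ = -J) (hJinv : IsUnit J)
    (Δ : Fin N → Matrix (Fin n) (Fin n) ℂ) (hΔ : ∀ j, (Δ j)ᴴ = Δ j)
    (U : Fin N → Matrix (Fin n) (Fin n) ℂ) (hU : ∀ j, (U j)ᴴ * J * U j = J) :
    (Cmat U)ᴴ * Bmat J Δ U - (Bmat J Δ U)ᴴ * Cmat U =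
      Matrix.of fun p q : Fin n × Fin (N + 1) =>
        if p.2 = q.2 then
          (if (p.2 : ℕ) = 0 then -J p.1 q.1 else 0) +
            (if (p.2 : ℕ) = N then J p.1 q.1 else 0)
        else 0 := by
  have hSS : (BB J Δ)ᴴ = BB J Δ - (2:ℂ) • JJ N J := by
    simp only [BB, JJ, blockDiagonal_conjTranspose]
    rw [← Matrix.blockDiagonal_smul, ← Matrix.blockDiagonal_sub]
    refine congrArg _ (funext fun j => ?_)
    simp only [Pi.sub_apply, Pi.smul_apply]
    rw [conjTranspose_add, conjTranspose_smul, hJ, hΔ]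
    have h2 : star (1/2 : ℂ) = 1/2 := by norm_num
    rw [h2]
    module
  have hUJU : (UU U)ᴴ * JJ N J * UU U = JJ N J := by
    rw [UU, JJ, blockDiagonal_conjTranspose, ← Matrix.blockDiagonal_mul,
      ← Matrix.blockDiagonal_mul]
    exact congrArg _ (funext hU)
  have key : (Cmat U)ᴴ * Bmat J Δ U - (Bmat J Δ U)ᴴ * Cmat U =
      (Etop n N)ᴴ * JJ N J * Etop n N - (Ebot n N)ᴴ * JJ N J * Ebot n N := by
    have h := aux_alg (UU U * Ebot n N) (Etop n N) (BB J Δ) (JJ N J) hSS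
    have e1 : Bmat J Δ U = (BB J Δ)ᴴ * (UU U * Ebot n N) + BB J Δ * Etop n N := by
      rw [Bmat, Matrix.mul_assoc]
    have e3 : (UU U * Ebot n N)ᴴ * JJ N J * (UU U * Ebot n N)
        = (Ebot n N)ᴴ * JJ N J * Ebot n N := by
      calc (UU U * Ebot n N)ᴴ * JJ N J * (UU U * Ebot n N)
          = (Ebot n N)ᴴ * ((UU U)ᴴ * JJ N J * UU U) * Ebot n N := by
            simp only [conjTranspose_mul, Matrix.mul_assoc]
        _ = (Ebot n N)ᴴ * JJ N J * Ebot n N := by rw [hUJU, Matrix.mul_assoc]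
    rw [Cmat, e1, h, e3]
  rw [key]
  ext p q
  rw [Matrix.sub_apply, aux_top, aux_bot, Matrix.of_apply]
  by_cases hpq : p.2 = q.2
  · have hv : (p.2 : ℕ) = (q.2 : ℕ) := by rw [hpq]
    have hlt := q.2.isLt
    by_cases hC : (q.2:ℕ) = 0 <;> by_cases hD : (q.2:ℕ) = N
    · have hN : N = 0 := by omega
      simp [hpq, hv, hC, hN]
    · have h1 : 0 < N := by omega
      have h2 : ¬(0 = N) := by omega
      simp [hpq, hv, hC, hD, h1, h2]
    · have h1 : 1 ≤ N := by omega
      have h2 : ¬(N = 0) := by omega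
      have hB : ¬ (q.2:ℕ) < N := by omega
      simp [hpq, hv, hC, hD, hB, h1, h2]
    · have hA : 1 ≤ (q.2:ℕ) := by omega
      have hB : (q.2:ℕ) < N := by omega
      simp [hpq, hv, hC, hD, hA, hB]
  · have hv : ¬((p.2 : ℕ) = (q.2 : ℕ)) := fun h => hpq (Fin.ext h)
    simp [hpq, hv]
end

section
/- In the setting of the block matrices above, suppose û ∈ ker B_m* and let ũ be the unique vector with Bũ = 0 and Cũ = û. Then for any vectors R ∈ ℂ^{nN}, I ∈ ℂ^{nN}, and Ĩ = (0,…,0,I_N)^⋄ ∈ ℂ^{nN}, defining F = R − ℬ*𝒰𝒥⁻¹I + ℬ𝒥⁻¹Ĩ, one has û*F = û*R + (E_⊥ũ)*I + (E_⊤ũ)*Ĩ. -/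
open Matrix

/-- for `û ∈ ker B_m*` with `ũ` the unique vector satisfying
`Bũ = 0`, `Cũ = û`, and any `R`, `I`, and `Ĩ = (0,…,0,I_N)^⋄`, the vector
`F = R - ℬ*𝒰𝒥⁻¹I + ℬ𝒥⁻¹Ĩ` satisfies
`û*F = û*R + (E_⊥ũ)*I + (E_⊤ũ)*Ĩ`. -/
theorem stmt16 {n N : ℕ} (J : Matrix (Fin n) (Fin n) ℂ)
    (hJ : Jᴴ = -J) (hJinv : IsUnit J)
    (Δ : Fin N → Matrix (Fin n) (Fin n) ℂ) (hΔ : ∀ j, (Δ j)ᴴ = Δ j)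
    (U : Fin N → Matrix (Fin n) (Fin n) ℂ) (hU : ∀ j, (U j)ᴴ * J * U j = J)
    (uhat : Fin n × Fin N → ℂ) (huhat : (Bm J Δ U)ᴴ *ᵥ uhat = 0)
    (utilde : Fin n × Fin (N + 1) → ℂ)
    (hB : Bmat J Δ U *ᵥ utilde = 0) (hC : Cmat U *ᵥ utilde = uhat)
    (R I : Fin n × Fin N → ℂ) (iN : Fin n → ℂ)
    (Itilde : Fin n × Fin N → ℂ)
    (hItilde : Itilde = fun p => if (p.2 : ℕ) = N - 1 then iN p.1 else 0) :
    star uhat ⬝ᵥ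
        (R - ((BB J Δ)ᴴ * UU U * (JJ N J)⁻¹) *ᵥ I +
          (BB J Δ * (JJ N J)⁻¹) *ᵥ Itilde) =
      star uhat ⬝ᵥ R + star (Ebot n N *ᵥ utilde) ⬝ᵥ I +
        star (Etop n N *ᵥ utilde) ⬝ᵥ Itilde := by
  classical
  set x := Ebot n N *ᵥ utilde with hx
  set y := Etop n N *ᵥ utilde with hy
  -- basic facts about the block matrices
  have f1 : BB J Δ - (BB J Δ)ᴴ = (2 : ℂ) • JJ N J := by
    have key : (fun j => J + (1/2 : ℂ) • Δ j) - (fun j => (J + (1/2 : ℂ) • Δ j)ᴴ)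
        = (2 : ℂ) • fun _ : Fin N => J := by
      funext j
      simp only [Pi.sub_apply, Pi.smul_apply]
      rw [conjTranspose_add, conjTranspose_smul, hJ, hΔ j]
      rw [show star (1/2 : ℂ) = (1/2 : ℂ) by norm_num [Complex.star_def]]
      module
    simp only [BB, JJ, Matrix.blockDiagonal_conjTranspose]
    rw [← Matrix.blockDiagonal_sub, key, Matrix.blockDiagonal_smul]
  have f2 : (UU U)ᴴ * JJ N J * UU U = JJ N J := by
    rw [UU, JJ, Matrix.blockDiagonal_conjTranspose, ← Matrix.blockDiagonal_mul,
      ← Matrix.blockDiagonal_mul]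
    exact congrArg _ (funext fun j => hU j)
  have f4 : (JJ N J)ᴴ = -(JJ N J) := by
    rw [JJ, Matrix.blockDiagonal_conjTranspose, ← Matrix.blockDiagonal_neg]
    exact congrArg _ (funext fun _ => by simp only [Pi.neg_apply]; exact hJ)
  have f3 : IsUnit (JJ N J).det := by
    rw [JJ, Matrix.det_blockDiagonal, Finset.prod_const]
    exact ((Matrix.isUnit_iff_isUnit_det J).mp hJinv).pow _
  have f3' : JJ N J * (JJ N J)⁻¹ = 1 := Matrix.mul_nonsing_inv _ f3
  -- consequences of hB and hC
  have hB' : BB J Δ *ᵥ y = -((BB J Δ)ᴴ *ᵥ (UU U *ᵥ x)) := by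
    have h := hB
    simp only [Bmat, Matrix.add_mulVec, ← Matrix.mulVec_mulVec] at h
    rw [← hx, ← hy] at h
    linear_combination (norm := module) h
  have hC' : uhat = (1/2 : ℂ) • (UU U *ᵥ x + y) := by
    rw [← hC]
    simp only [Cmat, Matrix.smul_mulVec, Matrix.add_mulVec, ← Matrix.mulVec_mulVec]
    rfl
  have claim1 : BB J Δ *ᵥ uhat = JJ N J *ᵥ (UU U *ᵥ x) := by
    rw [hC', Matrix.mulVec_smul, Matrix.mulVec_add, hB']
    have : BB J Δ *ᵥ (UU U *ᵥ x) + -((BB J Δ)ᴴ *ᵥ (UU U *ᵥ x))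
        = (BB J Δ - (BB J Δ)ᴴ) *ᵥ (UU U *ᵥ x) := by
      rw [Matrix.sub_mulVec]; module
    rw [this, f1, Matrix.smul_mulVec, smul_smul]
    norm_num
  have claim2 : (BB J Δ)ᴴ *ᵥ uhat = -(JJ N J *ᵥ y) := by
    rw [hC', Matrix.mulVec_smul, Matrix.mulVec_add]
    have hb2 : (BB J Δ)ᴴ *ᵥ (UU U *ᵥ x) = -(BB J Δ *ᵥ y) := by
      rw [hB', neg_neg]
    rw [hb2]
    have : -(BB J Δ *ᵥ y) + (BB J Δ)ᴴ *ᵥ y = -((BB J Δ - (BB J Δ)ᴴ) *ᵥ y) := by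
      rw [Matrix.sub_mulVec]; module
    rw [this, f1, Matrix.smul_mulVec, smul_neg, smul_smul]
    norm_num
  -- the two key dot-product identities
  have term1 : star uhat ⬝ᵥ (((BB J Δ)ᴴ * UU U * (JJ N J)⁻¹) *ᵥ I) = -(star x ⬝ᵥ I) := by
    rw [Matrix.dotProduct_mulVec]
    have e1 : star uhat ᵥ* ((BB J Δ)ᴴ * UU U * (JJ N J)⁻¹)
        = ((star uhat ᵥ* (BB J Δ)ᴴ) ᵥ* UU U) ᵥ* (JJ N J)⁻¹ := by
      rw [Matrix.vecMul_vecMul, Matrix.vecMul_vecMul, Matrix.mul_assoc]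
    have e2 : star uhat ᵥ* (BB J Δ)ᴴ = star (JJ N J *ᵥ (UU U *ᵥ x)) := by
      rw [← claim1, Matrix.star_mulVec]
    have e3 : star (JJ N J *ᵥ (UU U *ᵥ x)) ᵥ* UU U = -(star x ᵥ* JJ N J) := by
      have key : (UU U)ᴴ * ((JJ N J)ᴴ * UU U) = -(JJ N J) := by
        rw [← Matrix.mul_assoc, f4]
        calc (UU U)ᴴ * -(JJ N J) * UU U = -((UU U)ᴴ * JJ N J * UU U) := by noncomm_ring
        _ = -(JJ N J) := by rw [f2]
      rw [Matrix.star_mulVec, Matrix.star_mulVec, Matrix.vecMul_vecMul, Matrix.vecMul_vecMul,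
        key, Matrix.vecMul_neg]
    rw [e1, e2, e3, Matrix.neg_vecMul, Matrix.vecMul_vecMul, f3', Matrix.vecMul_one,
      neg_dotProduct]
  have term2 : star uhat ⬝ᵥ ((BB J Δ * (JJ N J)⁻¹) *ᵥ Itilde) = star y ⬝ᵥ Itilde := by
    rw [Matrix.dotProduct_mulVec]
    have e1 : star uhat ᵥ* (BB J Δ * (JJ N J)⁻¹)
        = (star uhat ᵥ* BB J Δ) ᵥ* (JJ N J)⁻¹ := by
      rw [Matrix.vecMul_vecMul]
    have e2 : star uhat ᵥ* BB J Δ = star y ᵥ* JJ N J := by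
      have : star ((BB J Δ)ᴴ *ᵥ uhat) = star uhat ᵥ* BB J Δ := by
        rw [Matrix.star_mulVec, conjTranspose_conjTranspose]
      rw [← this, claim2, star_neg, Matrix.star_mulVec, f4, Matrix.vecMul_neg, neg_neg]
    rw [e1, e2, Matrix.vecMul_vecMul, f3', Matrix.vecMul_one]
  -- put everything together
  rw [dotProduct_add, dotProduct_sub, term1, term2]
  ring
end
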